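/- Let A ∈ ℤ^{d×n} be of rank d, K > 0, and ω ∈ ℝ^d. A point x* ∈ ℝⁿ satisfies x* ∈ 𝒮_A⁺ and A·K·x* = ω if and only if x* is the unique minimizer of the convex optimization problem: minimize Σ_{j=1}^n ( x_j · arcsin(x_j) + √(1 − x_j²) ) subject to A·x = ω/K and x ∈ (−1,1)ⁿ. -/

import Mathlib

noncomputable section


/-- The real row span of the integer matrix `A`. -/
def rowSpanR {d n : ℕ} (A : Matrix (Fin d) (Fin n) ℤ) : Submodule ℝ (Fin n → ℝ) :=
  Submodule.span ℝ (Set.range fun i : Fin d => fun j : Fin n => (A i j : ℝ))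

/-- The polytope `P = Row(A) ∩ [-π/2, π/2]ⁿ`. -/
def Pcube {d n : ℕ} (A : Matrix (Fin d) (Fin n) ℤ) : Set (Fin n → ℝ) :=
  {x | x ∈ rowSpanR A ∧ ∀ j, x j ∈ Set.Icc (-(Real.pi / 2)) (Real.pi / 2)}

/-- `𝒮_A⁺ = sin(int P)`, the coordinatewise sine image of the (relative) interior of `P`. -/
def SAplus {d n : ℕ} (A : Matrix (Fin d) (Fin n) ℤ) : Set (Fin n → ℝ) :=
  (fun x j => Real.sin (x j)) '' intrinsicInterior ℝ (Pcube A)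

open Set Matrix Real Filter Topology

/-!
The objective `Φ x = ∑ j, F (x j)` with `F s = s * arcsin s + √(1 - s²)` is strictly convex on
`(-1,1)ⁿ` with gradient `arcsin ∘ x`. On the fibre `{x | A x = b} ∩ (-1,1)ⁿ` a point `x*` is
the unique minimiser iff `arcsin ∘ x*` is orthogonal to `ker A` (the tangent-line inequality
gives one direction, Fermat's rule along the kernel directions the other), i.e. iff
`arcsin ∘ x* ∈ Row(A)`. As the relative interior of `Row(A) ∩ [-π/2, π/2]ⁿ` is
`Row(A) ∩ (-π/2, π/2)ⁿ`, this says exactly that `x* = sin θ` with `θ ∈ int P`.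
-/

theorem mem_span_range_iff_forall_dotProduct_eq_zero {ι m K : Type*} [Finite ι] [Fintype m]
    [DecidableEq m] [Field K] (r : ι → m → K) (θ : m → K) :
    θ ∈ Submodule.span K (range r) ↔ ∀ v, (∀ i, r i ⬝ᵥ v = 0) → θ ⬝ᵥ v = 0 := by
  constructor
  · intro hθ v hv
    induction hθ using Submodule.span_induction with
    | mem u hu => obtain ⟨i, rfl⟩ := hu; exact hv i
    | zero => exact zero_dotProduct v
    | add u w _ _ hu hw => rw [add_dotProduct, hu, hw, add_zero]
    | smul c u _ hu => rw [smul_dotProduct, hu, smul_zero]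
  · intro h
    have hker : ⨅ i, LinearMap.ker (dotProductEquiv K m (r i)) ≤
        LinearMap.ker (dotProductEquiv K m θ) := fun v hv => by
      simp only [Submodule.mem_iInf, LinearMap.mem_ker, dotProductEquiv_apply_apply] at hv ⊢
      exact h v hv
    have := mem_span_of_iInf_ker_le_ker hker
    rwa [range_comp' (dotProductEquiv K m) r, ← LinearEquiv.coe_coe, Submodule.span_image,
      Submodule.mem_map_equiv, LinearEquiv.coe_coe, LinearEquiv.symm_apply_apply] at this

theorem StrictConvexOn.add_mul_sub_lt_of_hasDerivAt {S : Set ℝ} {f : ℝ → ℝ} {x y f' : ℝ}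
    (hf : StrictConvexOn ℝ S f) (hx : x ∈ S) (hy : y ∈ S) (hxy : x ≠ y)
    (hf' : HasDerivAt f f' x) : f x + f' * (y - x) < f y := by
  rcases hxy.lt_or_gt with hlt | hgt
  · have := hf.lt_slope_of_hasDerivAt hx hy hlt hf'
    rw [slope_def_field, lt_div_iff₀ (sub_pos.2 hlt)] at this
    linarith
  · have := hf.slope_lt_of_hasDerivAt hy hx hgt hf'
    rw [slope_def_field, div_lt_iff₀ (sub_pos.2 hgt)] at this
    linarith

theorem StrictConvexOn.sum_add_dotProduct_sub_lt {m : Type*} [Fintype m] {S : Set ℝ}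
    {f f' : ℝ → ℝ} (hf : StrictConvexOn ℝ S f) {a b : m → ℝ} (ha : ∀ j, a j ∈ S)
    (hb : ∀ j, b j ∈ S) (hab : a ≠ b) (hf' : ∀ j, HasDerivAt f (f' (a j)) (a j)) :
    ∑ j, f (a j) + (fun j => f' (a j)) ⬝ᵥ (b - a) < ∑ j, f (b j) := by
  obtain ⟨j₀, hj₀⟩ := Function.ne_iff.mp hab
  rw [dotProduct, ← Finset.sum_add_distrib]
  refine Finset.sum_lt_sum (fun j _ => ?_) ⟨j₀, Finset.mem_univ _, ?_⟩
  · rcases eq_or_ne (a j) (b j) with h | h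
    · simp [h]
    · exact (hf.add_mul_sub_lt_of_hasDerivAt (ha j) (hb j) h (hf' j)).le
  · exact hf.add_mul_sub_lt_of_hasDerivAt (ha j₀) (hb j₀) hj₀ (hf' j₀)

theorem hasDerivAt_sum_comp_add_mul {m : Type*} [Fintype m] {f f' : ℝ → ℝ} {a : m → ℝ}
    (hf' : ∀ j, HasDerivAt f (f' (a j)) (a j)) (v : m → ℝ) :
    HasDerivAt (fun t => ∑ j, f (a j + t * v j)) ((fun j => f' (a j)) ⬝ᵥ v) 0 := by
  refine HasDerivAt.fun_sum fun j _ => ?_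
  have hline : HasDerivAt (fun t : ℝ => a j + t * v j) (v j) 0 := by
    simpa using ((hasDerivAt_id (0 : ℝ)).mul_const (v j)).const_add (a j)
  exact (hf' j).comp_of_eq 0 hline (by simp)

def arcsinAntideriv (s : ℝ) : ℝ := s * arcsin s + √(1 - s ^ 2)

theorem hasDerivAt_arcsinAntideriv {t : ℝ} (ht : t ∈ Ioo (-1 : ℝ) 1) :
    HasDerivAt arcsinAntideriv (arcsin t) t := by
  have hpos : 0 < 1 - t ^ 2 := by nlinarith [ht.1, ht.2]
  refine (((hasDerivAt_id' t).mul (hasDerivAt_arcsin ht.1.ne' ht.2.ne)).add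
    (((hasDerivAt_pow 2 t).const_sub 1).sqrt hpos.ne')).congr_deriv ?_
  field_simp
  ring

theorem strictConvexOn_arcsinAntideriv : StrictConvexOn ℝ (Ioo (-1) 1) arcsinAntideriv := by
  refine StrictMonoOn.strictConvexOn_of_deriv (convex_Ioo _ _)
    (fun t ht => (hasDerivAt_arcsinAntideriv ht).continuousAt.continuousWithinAt) ?_
  rw [interior_Ioo]
  exact (strictMonoOn_arcsin.mono Ioo_subset_Icc_self).congr
    fun t ht => (hasDerivAt_arcsinAntideriv ht).deriv.symm

theorem StrictConvexOn.forall_sum_lt_iff_mem_span {ι m : Type*} [Finite ι] [Fintype m]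
    [DecidableEq m] {S : Set ℝ} {f f' : ℝ → ℝ} (hf : StrictConvexOn ℝ S f) (hS : IsOpen S)
    (hf' : ∀ t ∈ S, HasDerivAt f (f' t) t) (r : ι → m → ℝ) {a : m → ℝ} (ha : ∀ j, a j ∈ S) :
    (∀ x : m → ℝ, (∀ i, r i ⬝ᵥ x = r i ⬝ᵥ a) → (∀ j, x j ∈ S) → x ≠ a →
        ∑ j, f (a j) < ∑ j, f (x j)) ↔
      (fun j => f' (a j)) ∈ Submodule.span ℝ (range r) := by
  have hfa : ∀ j, HasDerivAt f (f' (a j)) (a j) := fun j => hf' _ (ha j)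
  rw [mem_span_range_iff_forall_dotProduct_eq_zero]
  constructor
  · intro hmin v hv
    have hnear : ∀ᶠ t in 𝓝 (0 : ℝ), ∀ j, a j + t * v j ∈ S :=
      eventually_all.2 fun j => (by fun_prop : Continuous fun t : ℝ => a j + t * v j)
        |>.continuousAt.preimage_mem_nhds (hS.mem_nhds (by simpa using ha j))
    have hloc : IsLocalMin (fun t => ∑ j, f (a j + t * v j)) 0 := by
      filter_upwards [hnear] with t ht
      simp only [zero_mul, add_zero]
      by_cases heq : (fun j => a j + t * v j) = a
      · simp only [funext_iff] at heq
        simp only [heq, le_refl]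
      · refine (hmin _ (fun i => ?_) ht heq).le
        change r i ⬝ᵥ (a + t • v) = _
        rw [dotProduct_add, dotProduct_smul, hv i, smul_zero, add_zero]
    exact hloc.hasDerivAt_eq_zero (hasDerivAt_sum_comp_add_mul hfa v)
  · intro horth x hx hxS hne
    have := hf.sum_add_dotProduct_sub_lt ha hxS hne.symm hfa
    rwa [horth (x - a) fun i => by rw [dotProduct_sub, hx i, sub_self], add_zero] at this

theorem intrinsicInterior_inter_closedBall {E : Type*} [NormedAddCommGroup E] [NormedSpace ℝ E]
    (V : Submodule ℝ E) {r : ℝ} (hr : 0 < r) :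
    intrinsicInterior ℝ ((V : Set E) ∩ Metric.closedBall 0 r) =
      (V : Set E) ∩ Metric.ball 0 r := by
  set s := (V : Set E) ∩ Metric.closedBall 0 r
  have hspan : ∀ x ∈ affineSpan ℝ s, x ∈ V := fun x hx =>
    (affineSpan_le.2 fun y hy => hy.1 : affineSpan ℝ s ≤ V.toAffineSubspace) hx
  ext x
  constructor
  · rintro ⟨y, hy, rfl⟩
    refine ⟨hspan y y.2, ?_⟩
    -- The ray `t ↦ t • y` stays in the affine span, which contains `0`; for `t > 1` close to
    -- `1` it stays in `s`, so `y` cannot lie on the sphere.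
    have h0 : (0 : E) ∈ affineSpan ℝ s := subset_affineSpan ℝ s ⟨V.zero_mem, by simp [hr.le]⟩
    let g : ℝ → affineSpan ℝ s := fun t =>
      ⟨AffineMap.lineMap 0 (y : E) t, AffineMap.lineMap_mem t h0 y.2⟩
    have hg : Continuous g := by fun_prop
    have hg1 : g 1 = y := Subtype.ext (AffineMap.lineMap_apply_one _ _)
    have hnhds : {t : ℝ | ‖t • (y : E)‖ ≤ r} ∈ 𝓝 1 := by
      have := hg.continuousAt.preimage_mem_nhds (hg1 ▸ mem_interior_iff_mem_nhds.1 hy)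
      refine mem_of_superset this fun t ht => ?_
      simpa [g, AffineMap.lineMap_apply_module] using ht.2
    obtain ⟨ε, hε, hball⟩ := Metric.mem_nhds_iff.1 hnhds
    have hscaled : ‖(1 + ε / 2) • (y : E)‖ ≤ r :=
      hball (by simp [abs_of_pos hε, hε])
    rw [norm_smul, Real.norm_of_nonneg (by positivity)] at hscaled
    rw [mem_ball_zero_iff]
    nlinarith [norm_nonneg (y : E)]
  · rintro ⟨hxV, hxr⟩
    refine ⟨⟨x, subset_affineSpan ℝ s ⟨hxV, Metric.ball_subset_closedBall hxr⟩⟩, ?_, rfl⟩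
    refine interior_maximal (t := ((↑) : affineSpan ℝ s → E) ⁻¹' Metric.ball 0 r) ?_
      (Metric.isOpen_ball.preimage continuous_subtype_val) hxr
    rintro ⟨z, hz⟩ hzr
    exact ⟨hspan z hz, Metric.ball_subset_closedBall hzr⟩

theorem Pcube_eq_inter_closedBall {d n : ℕ} (A : Matrix (Fin d) (Fin n) ℤ) :
    Pcube A = (rowSpanR A : Set (Fin n → ℝ)) ∩ Metric.closedBall 0 (π / 2) := by
  ext x
  simp [Pcube, pi_norm_le_iff_of_nonneg (by positivity : 0 ≤ π / 2), abs_le]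

theorem intrinsicInterior_Pcube {d n : ℕ} (A : Matrix (Fin d) (Fin n) ℤ) :
    intrinsicInterior ℝ (Pcube A) =
      {x | x ∈ rowSpanR A ∧ ∀ j, x j ∈ Ioo (-(π / 2)) (π / 2)} := by
  rw [Pcube_eq_inter_closedBall, intrinsicInterior_inter_closedBall _ (by positivity)]
  ext x
  simp [pi_norm_lt_iff (by positivity : 0 < π / 2), abs_lt]

theorem mem_SAplus_iff {d n : ℕ} (A : Matrix (Fin d) (Fin n) ℤ) (y : Fin n → ℝ) :
    y ∈ SAplus A ↔ (∀ j, y j ∈ Ioo (-1 : ℝ) 1) ∧ (fun j => arcsin (y j)) ∈ rowSpanR A := by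
  rw [SAplus, intrinsicInterior_Pcube]
  constructor
  · rintro ⟨θ, ⟨hθ, hθπ⟩, rfl⟩
    have harcsin : ∀ j, arcsin (sin (θ j)) = θ j := fun j =>
      arcsin_sin (hθπ j).1.le (hθπ j).2.le
    refine ⟨fun j => ?_, by simpa only [harcsin] using hθ⟩
    obtain ⟨hlo, hhi⟩ := hθπ j
    rw [← harcsin j] at hlo hhi
    exact ⟨neg_pi_div_two_lt_arcsin.1 hlo, arcsin_lt_pi_div_two.1 hhi⟩
  · rintro ⟨hy, hθ⟩
    refine ⟨_, ⟨hθ, fun j => ?_⟩, funext fun j => sin_arcsin (hy j).1.le (hy j).2.le⟩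
    exact ⟨neg_pi_div_two_lt_arcsin.2 (hy j).1, arcsin_lt_pi_div_two.2 (hy j).2⟩

theorem sum_const_mul_mul_eq_iff {ι : Type*} [Fintype ι] {K : ℝ} (hK : K ≠ 0) (a x : ι → ℝ)
    (w : ℝ) :
    ∑ j, K * a j * x j = w ↔ ∑ j, a j * x j = w / K := by
  simp_rw [mul_assoc, ← Finset.mul_sum]
  rw [eq_div_iff hK, mul_comm]

theorem stmt9_general {d n : ℕ} (A : Matrix (Fin d) (Fin n) ℤ)
    (K : ℝ) (hK : 0 < K) (ω : Fin d → ℝ) (xstar : Fin n → ℝ) :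
    (xstar ∈ SAplus A ∧ ∀ i, ∑ j, K * (A i j : ℝ) * xstar j = ω i) ↔
    ((∀ i, ∑ j, (A i j : ℝ) * xstar j = ω i / K) ∧
     (∀ j, xstar j ∈ Set.Ioo (-1 : ℝ) 1) ∧
     ∀ x : Fin n → ℝ,
       ((∀ i, ∑ j, (A i j : ℝ) * x j = ω i / K) ∧ ∀ j, x j ∈ Set.Ioo (-1 : ℝ) 1) →
       x ≠ xstar →
       (∑ j, (xstar j * Real.arcsin (xstar j) + Real.sqrt (1 - xstar j ^ 2))) <
         ∑ j, (x j * Real.arcsin (x j) + Real.sqrt (1 - x j ^ 2))) := by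
  have hkkt := fun hxstar : ∀ j, xstar j ∈ Ioo (-1 : ℝ) 1 =>
    strictConvexOn_arcsinAntideriv.forall_sum_lt_iff_mem_span isOpen_Ioo
      (fun _ => hasDerivAt_arcsinAntideriv) (fun i j => (A i j : ℝ)) hxstar
  simp only [mem_SAplus_iff, sum_const_mul_mul_eq_iff hK.ne']
  constructor
  · rintro ⟨⟨hxstar, hθ⟩, hA⟩
    exact ⟨hA, hxstar, fun x ⟨hxA, hx⟩ hne =>
      (hkkt hxstar).2 hθ x (fun i => (hxA i).trans (hA i).symm) hx hne⟩
  · rintro ⟨hA, hxstar, hmin⟩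
    exact ⟨⟨hxstar, (hkkt hxstar).1 fun x hxA hx hne =>
      hmin x ⟨fun i => (hxA i).trans (hA i), hx⟩ hne⟩, hA⟩

/-- Theorem 4.3: `x* ∈ 𝒮_A⁺` with `A K x* = ω` iff `x*` is the unique minimizer of
`Σ (x_j arcsin x_j + √(1-x_j²))` subject to `A x = ω/K`, `x ∈ (-1,1)ⁿ`. -/
theorem stmt9 {d n : ℕ} (A : Matrix (Fin d) (Fin n) ℤ)
    (hrank : (A.map fun z => (z : ℚ)).rank = d)
    (K : ℝ) (hK : 0 < K) (ω : Fin d → ℝ) (xstar : Fin n → ℝ) :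
    (xstar ∈ SAplus A ∧ ∀ i, ∑ j, K * (A i j : ℝ) * xstar j = ω i) ↔
    ((∀ i, ∑ j, (A i j : ℝ) * xstar j = ω i / K) ∧
     (∀ j, xstar j ∈ Set.Ioo (-1 : ℝ) 1) ∧
     ∀ x : Fin n → ℝ,
       ((∀ i, ∑ j, (A i j : ℝ) * x j = ω i / K) ∧ ∀ j, x j ∈ Set.Ioo (-1 : ℝ) 1) →
       x ≠ xstar →
       (∑ j, (xstar j * Real.arcsin (xstar j) + Real.sqrt (1 - xstar j ^ 2))) <
         ∑ j, (x j * Real.arcsin (x j) + Real.sqrt (1 - x j ^ 2))) :=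
  stmt9_general A K hK ω xstar
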